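/- With A = E(1) ⊗ E(n-1)^{r-1} as above, k = min{n-1, 2r-2}, and J ⊆ {1,…,n-1} with |J| = k, the bidegree-(r, k+1-r) component of the product π = ē₀ ∏_{i∈J} ē_i equals ∑_{I ⊆ J, |I| = r-1} ± e₀e_I ⊗ e_{J∖I}, and this sum is nonzero because the terms e₀e_I ⊗ e_{J∖I} are distinct elements of a basis of A ⊗ A. -/

import Mathlib

open ExteriorAlgebra

/-! Let `A = E(1) ⊗ E(n-1)^{r-1}` be the Koszul-signed graded tensor product of the exterior
algebra on one degree-one generator `e₀` with the exterior algebra on `n-1` degree-one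
generators `e₁, …, e_{n-1}` truncated above degree `r-1`.  Since the Koszul tensor product of
exterior algebras is the exterior algebra on the direct sum of the generating spaces, both `A`
and its Koszul tensor square `A ⊗ A` have canonical presentations as quotients of exterior
algebras: `A ⊗ A` is the exterior algebra on two copies (indexed by `b : Fin 2`, where `b = 0`
is the left tensor factor and `b = 1` the right one) of the generators `e₀, …, e_{n-1}`,
modulo the two-sided ideal generated by the degree-`r` monomials in `e₁, …, e_{n-1}` of each
copy.  Under this identification `x ⊗ y` corresponds to `x⁽⁰⁾ · y⁽¹⁾`. -/

/-- The exterior algebra on two copies of the `n` generators. -/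
abbrev ExtAlg2 (n : ℕ) : Type := ExteriorAlgebra ℂ (Fin 2 × Fin n → ℂ)

/-- The generator `e_i` of the copy `b` (`b = 0`: left factor `e_i ⊗ 1`;
`b = 1`: right factor `1 ⊗ e_i`). -/
noncomputable def bgen (n : ℕ) (b : Fin 2) (i : Fin n) : ExtAlg2 n :=
  ι ℂ (Pi.single (b, i) 1)

/-- The monomial `e_S` in the generators of the copy `b`, in increasing order. -/
noncomputable def bProd (n : ℕ) (b : Fin 2) (S : Finset (Fin n)) : ExtAlg2 n :=
  ((S.sort (· ≤ ·)).map (bgen n b)).prod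

/-- The relation killing the degree-`r` monomials in `e₁, …, e_{n-1}` of each copy:
the truncation of each tensor factor of `A ⊗ A` above degree `r-1`. -/
def A2Rel (n r : ℕ) : ExtAlg2 n → ExtAlg2 n → Prop :=
  fun x y => y = 0 ∧ ∃ (b : Fin 2) (S : Finset (Fin n)),
    (∀ i ∈ S, (i : ℕ) ≠ 0) ∧ S.card = r ∧ x = bProd n b S

/-- `A ⊗ A` with the sign-twisted multiplication, in its canonical presentation. -/
abbrev A2 (n r : ℕ) : Type := RingQuot (A2Rel n r)

/-- The quotient map onto `A ⊗ A`. -/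
noncomputable def a2mk (n r : ℕ) : ExtAlg2 n →ₐ[ℂ] A2 n r :=
  RingQuot.mkAlgHom ℂ (A2Rel n r)

/-- `ē_i = 1⊗e_i − e_i⊗1` in `A ⊗ A`. -/
noncomputable def ebar (n r : ℕ) (i : Fin n) : A2 n r :=
  a2mk n r (bgen n 1 i) - a2mk n r (bgen n 0 i)

/-- The span of the degree-one generators of the copy `b`. -/
noncomputable def blockV (n : ℕ) (b : Fin 2) : Submodule ℂ (Fin 2 × Fin n → ℂ) :=
  Submodule.span ℂ (Set.range fun i : Fin n => (Pi.single (b, i) 1 : Fin 2 × Fin n → ℂ))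

/-- The bidegree-`(s,t)` component `A_s ⊗ A_t` of `A ⊗ A`: the image in `A ⊗ A` of the span of
products of `s` generators of the left copy and `t` generators of the right copy. -/
noncomputable def bicomp (n r s t : ℕ) : Submodule ℂ (A2 n r) :=
  (((blockV n 0).map (ι ℂ)) ^ s * ((blockV n 1).map (ι ℂ)) ^ t).map (a2mk n r).toLinearMap

/-- `e₀e_I ⊗ e_{J∖I}` as an element of `A ⊗ A`. -/
noncomputable def basicTerm (n r : ℕ) (hn : 0 < n) (J I : Finset (Fin n)) : A2 n r :=
  a2mk n r (bgen n 0 ⟨0, hn⟩ * bProd n 0 I * bProd n 1 (J \ I))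


/-! Expanding `π = ∏_{i ∈ {0} ∪ J} (1⊗e_i − e_i⊗1)` in increasing order of `i` gives
`∑_{U ⊆ {0} ∪ J} ± e_U ⊗ e_{({0} ∪ J) ∖ U}`. The summands with `U = {0} ∪ I`, `|I| = r - 1`, form
the `(r, k+1-r)`-component; every other summand lies in a bicomponent of left degree `≠ r`, or
has `U ⊆ J` with `|U| = r` and vanishes by the truncation.

Each `e₀e_{I₀} ⊗ e_{J∖I₀}` is detected by a linear form on `A ⊗ A`: restrict the coordinates to
the generators occurring in it and take the top-degree determinant. The restriction kills the
truncation ideal because neither tensor factor has `r` of these generators among `e₁, …, e_{n-1}`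
(this is where `|J| ≤ 2r - 2` enters), and it kills `e₀e_I ⊗ e_{J∖I}` for `I ≠ I₀`. Hence these
terms are linearly independent, and the component, a `±1`-combination of them, is nonzero. -/

theorem LinearIndependent.sum_smul_ne_zero {ι R M : Type*} [Ring R] [AddCommGroup M] [Module R M]
    {s : Finset ι} {v : ι → M} (hv : LinearIndependent R fun i : s => v i) {c : ι → R}
    (hc : ∀ i ∈ s, c i ≠ 0) (hs : s.Nonempty) : ∑ i ∈ s, c i • v i ≠ 0 := by
  obtain ⟨i, hi⟩ := hs
  intro h
  rw [← Finset.sum_coe_sort] at h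
  exact hc i hi (Fintype.linearIndependent_iff.mp hv (fun j => c j) h ⟨i, hi⟩)

namespace ExteriorAlgebra

variable {R : Type*} [CommRing R]

theorem ι_mul_prod_map_ι {M : Type*} [AddCommGroup M] [Module R M] (v : M) (l : List M) :
    ι R v * (l.map (ι R)).prod = (-1 : R) ^ l.length • ((l.map (ι R)).prod * ι R v) := by
  induction l with
  | nil => simp
  | cons w l ih =>
    have hswap : ι R v * ι R w = -(ι R w * ι R v) :=
      eq_neg_of_add_eq_zero_left (ι_add_mul_swap v w)
    rw [List.map_cons, List.prod_cons, List.length_cons, ← mul_assoc, hswap, neg_mul, mul_assoc,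
      ih, mul_smul_comm, ← mul_assoc, pow_succ', mul_smul, neg_one_smul]

theorem liftAlternating_single_det_ιMulti {M : Type*} [AddCommGroup M] [Module R M] {m : ℕ}
    (b : Module.Basis (Fin m) R M) :
    liftAlternating (Pi.single m b.det) (ιMulti R m b) = (1 : R) := by
  rw [liftAlternating_apply_ιMulti, Pi.single_eq_same, Module.Basis.det_self]

variable {κ : Type*} [DecidableEq κ] {m : ℕ}

theorem map_funLeft_ι_single_of_notMem_range (e : Fin m → κ) {p : κ} (hp : p ∉ Set.range e) :
    map (LinearMap.funLeft R R e) (ι R (Pi.single p 1)) = 0 := by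
  have hzero : LinearMap.funLeft R R e (Pi.single p 1) = 0 := by
    ext j
    exact Pi.single_eq_of_ne (fun h => hp ⟨j, h⟩) 1
  rw [map_apply_ι, hzero, map_zero]

theorem map_funLeft_ι_single_apply {e : Fin m → κ} (he : Function.Injective e) (j : Fin m) :
    map (LinearMap.funLeft R R e) (ι R (Pi.single (e j) 1)) = ι R (Pi.single j 1) := by
  rw [map_apply_ι]
  congr 1
  ext j'
  simp [LinearMap.funLeft_apply, Pi.single_apply, he.eq_iff]

theorem map_funLeft_prod_ofFn_ι_single {e : Fin m → κ} (he : Function.Injective e) :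
    map (LinearMap.funLeft R R e) (List.ofFn fun j => ι R (Pi.single (e j) (1 : R))).prod =
      ιMulti R m (Pi.basisFun R (Fin m)) := by
  simp only [ιMulti_apply, map_list_prod, List.map_ofFn, Function.comp_def,
    map_funLeft_ι_single_apply he, Pi.basisFun_apply]

end ExteriorAlgebra

section Monomials

variable {n r : ℕ}

theorem bProd_insert_of_lt (b : Fin 2) {i : Fin n} {S : Finset (Fin n)} (h : ∀ j ∈ S, i < j) :
    bProd n b (insert i S) = bgen n b i * bProd n b S := by
  rw [bProd, Finset.sort_insert (r := (· ≤ ·)) (fun j hj => (h j hj).le)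
    (fun hi => lt_irrefl i (h i hi)), List.map_cons, List.prod_cons, bProd]

theorem bgen_mul_bProd (b b' : Fin 2) (i : Fin n) (S : Finset (Fin n)) :
    bgen n b i * bProd n b' S = (-1 : ℂ) ^ S.card • (bProd n b' S * bgen n b i) := by
  have h := ι_mul_prod_map_ι (R := ℂ) (Pi.single (b, i) 1)
    ((S.sort (· ≤ ·)).map fun j => (Pi.single (b', j) 1 : Fin 2 × Fin n → ℂ))
  rwa [List.map_map, List.length_map, Finset.length_sort] at h

theorem bgen_one_mul_bProd_mul_bProd {i : Fin n} (A : Finset (Fin n)) {B : Finset (Fin n)}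
    (h : ∀ j ∈ B, i < j) :
    bgen n 1 i * (bProd n 0 A * bProd n 1 B) =
      (-1 : ℂ) ^ A.card • (bProd n 0 A * bProd n 1 (insert i B)) := by
  rw [← mul_assoc, bgen_mul_bProd, smul_mul_assoc, mul_assoc, ← bProd_insert_of_lt 1 h]

theorem exists_prod_map_bgen_sub_eq_sum (T : Finset (Fin n)) :
    ∃ ε : Finset (Fin n) → ℂ, (∀ U, ε U = 1 ∨ ε U = -1) ∧
      ((T.sort (· ≤ ·)).map fun i => bgen n 1 i - bgen n 0 i).prod =
        ∑ U ∈ T.powerset, ε U • (bProd n 0 U * bProd n 1 (T \ U)) := by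
  induction T using Finset.induction_on_min with
  | empty => exact ⟨fun _ => 1, fun _ => .inl rfl, by simp [bProd]⟩
  | insert a T ha ih =>
    obtain ⟨ε, hε, hT⟩ := ih
    have haT : a ∉ T := fun h => lt_irrefl a (ha a h)
    refine ⟨fun U => if a ∈ U then -ε (U.erase a) else (-1) ^ U.card * ε U, fun U => ?_, ?_⟩
    · dsimp only
      split_ifs
      · rcases hε (U.erase a) with h | h <;> simp [h]
      · rcases neg_one_pow_eq_or ℂ U.card with h | h <;> rcases hε U with h' | h' <;>
          simp [h, h']
    rw [Finset.sort_insert (r := (· ≤ ·)) (fun b hb => (ha b hb).le) haT, List.map_cons,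
      List.prod_cons, hT, Finset.sum_powerset_insert haT, Finset.mul_sum, ← Finset.sum_add_distrib]
    refine Finset.sum_congr rfl fun U hU => ?_
    have haU : a ∉ U := fun h => haT (Finset.mem_powerset.mp hU h)
    have hlt : ∀ j ∈ T \ U, a < j := fun j hj => ha j (Finset.mem_sdiff.mp hj).1
    have hltU : ∀ j ∈ U, a < j := fun j hj => ha j (Finset.mem_powerset.mp hU hj)
    dsimp only
    rw [if_neg haU, if_pos (Finset.mem_insert_self a U), Finset.erase_insert haU,
      Finset.insert_sdiff_of_notMem _ haU, Finset.insert_sdiff_insert,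
      Finset.sdiff_insert_of_notMem haT, sub_mul, mul_smul_comm, mul_smul_comm,
      bgen_one_mul_bProd_mul_bProd U hlt, ← mul_assoc, ← bProd_insert_of_lt 0 hltU, mul_smul,
      neg_smul, sub_eq_add_neg, smul_comm]

end Monomials

section TensorSquare

variable {n r : ℕ}

theorem bProd_mem_pow (b : Fin 2) (S : Finset (Fin n)) :
    bProd n b S ∈ ((blockV n b).map (ι ℂ)) ^ S.card := by
  rw [bProd, ← Finset.length_sort (· ≤ ·)]
  induction S.sort (· ≤ ·) with
  | nil => simp
  | cons j l ih =>
    rw [List.map_cons, List.prod_cons, List.length_cons, pow_succ']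
    exact Submodule.mul_mem_mul (Submodule.mem_map_of_mem (Submodule.subset_span ⟨j, rfl⟩)) ih

theorem a2mk_bProd_mul_bProd_mem_bicomp (A B : Finset (Fin n)) :
    a2mk n r (bProd n 0 A * bProd n 1 B) ∈ bicomp n r A.card B.card :=
  Submodule.mem_map_of_mem (Submodule.mul_mem_mul (bProd_mem_pow 0 A) (bProd_mem_pow 1 B))

theorem a2mk_bProd_mul_bProd_mem_iSup_bicomp {A : Finset (Fin n)} (B : Finset (Fin n)) {s : ℕ}
    (hA : A.card ≠ s) (t : ℕ) :
    a2mk n r (bProd n 0 A * bProd n 1 B) ∈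
      ⨆ (p : ℕ × ℕ) (_ : p ≠ (s, t)), bicomp n r p.1 p.2 :=
  Submodule.mem_iSup_of_mem (A.card, B.card) <|
    Submodule.mem_iSup_of_mem (fun h => hA (congrArg Prod.fst h))
      (a2mk_bProd_mul_bProd_mem_bicomp A B)

theorem a2mk_bProd_eq_zero (b : Fin 2) {S : Finset (Fin n)} (hS : ∀ i ∈ S, (i : ℕ) ≠ 0)
    (hcard : S.card = r) : a2mk n r (bProd n b S) = 0 := by
  rw [a2mk, RingQuot.mkAlgHom_rel ℂ (show A2Rel n r (bProd n b S) 0 from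
    ⟨rfl, b, S, hS, hcard, rfl⟩), map_zero]

end TensorSquare

section Dual

variable {n r : ℕ}

def bimonomialIndex (A B : Finset (Fin n)) : List (Fin 2 × Fin n) :=
  (A.sort (· ≤ ·)).map (0, ·) ++ (B.sort (· ≤ ·)).map (1, ·)

theorem bProd_mul_bProd_eq_prod_bimonomialIndex (A B : Finset (Fin n)) :
    bProd n 0 A * bProd n 1 B =
      ((bimonomialIndex A B).map fun p => ι ℂ (Pi.single p (1 : ℂ))).prod := by
  simp only [bProd, bimonomialIndex, List.map_append, List.map_map, List.prod_append]
  rfl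

theorem nodup_bimonomialIndex (A B : Finset (Fin n)) : (bimonomialIndex A B).Nodup := by
  refine List.Nodup.append ((Finset.sort_nodup _ _).map (Prod.mk_right_injective 0))
    ((Finset.sort_nodup _ _).map (Prod.mk_right_injective 1)) ?_
  simp [List.disjoint_left]

theorem mk_mem_bimonomialIndex {A B : Finset (Fin n)} {b : Fin 2} {i : Fin n} :
    (b, i) ∈ bimonomialIndex A B ↔ b = 0 ∧ i ∈ A ∨ b = 1 ∧ i ∈ B := by
  simp [bimonomialIndex, eq_comm, and_comm]

theorem exists_dual_bimonomial {A B : Finset (Fin n)}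
    (hA : (A.filter fun i : Fin n => (i : ℕ) ≠ 0).card < r)
    (hB : (B.filter fun i : Fin n => (i : ℕ) ≠ 0).card < r) :
    ∃ Φ : A2 n r →ₗ[ℂ] ℂ, Φ (a2mk n r (bProd n 0 A * bProd n 1 B)) = 1 ∧
      ∀ A' B' : Finset (Fin n), ¬ A' ⊆ A → Φ (a2mk n r (bProd n 0 A' * bProd n 1 B')) = 0 := by
  set L := bimonomialIndex A B
  set ψ : ExtAlg2 n →ₐ[ℂ] ExteriorAlgebra ℂ (Fin L.length → ℂ) :=
    ExteriorAlgebra.map (LinearMap.funLeft ℂ ℂ L.get)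
  have hψ_monomial :
      ψ (bProd n 0 A * bProd n 1 B) = ιMulti ℂ _ (Pi.basisFun ℂ (Fin L.length)) := by
    rw [bProd_mul_bProd_eq_prod_bimonomialIndex, ← List.ofFn_getElem_eq_map]
    exact map_funLeft_prod_ofFn_ι_single
      (List.nodup_iff_injective_get.mp (nodup_bimonomialIndex A B))
  have hψ_bProd : ∀ b S i, i ∈ S → (b, i) ∉ L → ψ (bProd n b S) = 0 := by
    intro b S i hiS hiL
    rw [bProd, map_list_prod, List.map_map]
    refine List.prod_eq_zero (List.mem_map.mpr ⟨i, (Finset.mem_sort _).mpr hiS, ?_⟩)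
    exact map_funLeft_ι_single_of_notMem_range _ fun ⟨j, hj⟩ => hiL (hj ▸ List.get_mem L j)
  have hrel : ∀ ⦃x y⦄, A2Rel n r x y → ψ x = ψ y := by
    rintro _ _ ⟨rfl, b, S, hS0, hScard, rfl⟩
    obtain ⟨i, hiS, hiL⟩ : ∃ i ∈ S, (b, i) ∉ L := by
      by_contra! hSL
      fin_cases b <;>
      · have := Finset.card_le_card fun i hi =>
          Finset.mem_filter.mpr ⟨by simpa [L, mk_mem_bimonomialIndex] using hSL i hi, hS0 i hi⟩
        omega
    rw [map_zero, hψ_bProd b S i hiS hiL]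
  have hψq (x : ExtAlg2 n) : RingQuot.liftAlgHom ℂ ⟨ψ, hrel⟩ (a2mk n r x) = ψ x :=
    RingQuot.liftAlgHom_mkAlgHom_apply ℂ ψ hrel x
  refine ⟨liftAlternating (Pi.single L.length (Pi.basisFun ℂ (Fin L.length)).det) ∘ₗ
    (RingQuot.liftAlgHom ℂ ⟨ψ, hrel⟩).toLinearMap, ?_, fun A' B' hA' => ?_⟩
  · rw [LinearMap.comp_apply, AlgHom.toLinearMap_apply, hψq, hψ_monomial,
      liftAlternating_single_det_ιMulti]
  · obtain ⟨i, hiA', hiA⟩ := Finset.not_subset.mp hA'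
    rw [LinearMap.comp_apply, AlgHom.toLinearMap_apply, hψq, map_mul,
      hψ_bProd 0 A' i hiA' (by simp [L, mk_mem_bimonomialIndex, hiA]), zero_mul, map_zero]

end Dual

section Component

variable {n r : ℕ}

theorem basicTerm_eq (hn : 0 < n) (J : Finset (Fin n)) {I : Finset (Fin n)}
    (hI : ∀ i ∈ I, (i : ℕ) ≠ 0) :
    basicTerm n r hn J I = a2mk n r (bProd n 0 (insert ⟨0, hn⟩ I) * bProd n 1 (J \ I)) := by
  rw [basicTerm, bProd_insert_of_lt 0 fun i hi => Fin.lt_def.mpr (Nat.pos_of_ne_zero (hI i hi))]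

theorem basicTerm_mem_bicomp (hn : 0 < n) {J I : Finset (Fin n)} (hJ0 : ∀ i ∈ J, (i : ℕ) ≠ 0)
    (hIJ : I ⊆ J) : basicTerm n r hn J I ∈ bicomp n r (I.card + 1) (J.card - I.card) := by
  have hI0 : ∀ i ∈ I, (i : ℕ) ≠ 0 := fun i hi => hJ0 i (hIJ hi)
  have h := a2mk_bProd_mul_bProd_mem_bicomp (r := r) (insert ⟨0, hn⟩ I) (J \ I)
  rwa [← basicTerm_eq hn J hI0, Finset.card_insert_of_notMem fun h => hI0 _ h rfl,
    Finset.card_sdiff_of_subset hIJ] at h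

theorem exists_dual_basicTerm (hn : 0 < n) {J : Finset (Fin n)} (hJ0 : ∀ i ∈ J, (i : ℕ) ≠ 0)
    (hJ : J.card + 1 < 2 * r) {I₀ : Finset (Fin n)} (hI₀J : I₀ ⊆ J) (hI₀ : I₀.card = r - 1) :
    ∃ Φ : A2 n r →ₗ[ℂ] ℂ, Φ (basicTerm n r hn J I₀) = 1 ∧
      ∀ I ⊆ J, I.card = r - 1 → I ≠ I₀ → Φ (basicTerm n r hn J I) = 0 := by
  have hI₀0 : ∀ i ∈ I₀, (i : ℕ) ≠ 0 := fun i hi => hJ0 i (hI₀J hi)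
  have hA : ((insert ⟨0, hn⟩ I₀).filter fun i : Fin n => (i : ℕ) ≠ 0).card < r := by
    rw [Finset.filter_insert, if_neg (not_not.mpr rfl), Finset.filter_true_of_mem hI₀0]
    omega
  have hB : ((J \ I₀).filter fun i : Fin n => (i : ℕ) ≠ 0).card < r :=
    (Finset.card_filter_le _ _).trans_lt (by rw [Finset.card_sdiff_of_subset hI₀J]; omega)
  obtain ⟨Φ, hΦI₀, hΦ⟩ := exists_dual_bimonomial hA hB
  refine ⟨Φ, by rwa [basicTerm_eq hn J hI₀0], fun I hIJ hI hne => ?_⟩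
  have hI0 : ∀ i ∈ I, (i : ℕ) ≠ 0 := fun i hi => hJ0 i (hIJ hi)
  rw [basicTerm_eq hn J hI0]
  refine hΦ _ _ fun hsub => hne (Finset.eq_of_subset_of_card_le (fun i hi => ?_) (by omega))
  exact (Finset.mem_insert.mp (hsub (Finset.mem_insert_of_mem hi))).resolve_left
    fun h => hI0 i hi (congrArg Fin.val h)

theorem linearIndependent_basicTerm (hn : 0 < n) {J : Finset (Fin n)}
    (hJ0 : ∀ i ∈ J, (i : ℕ) ≠ 0) (hJ : J.card + 1 < 2 * r) :
    LinearIndependent ℂ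
      (fun I : {I : Finset (Fin n) // I ∈ J.powerset.filter (fun I => I.card = r - 1)} =>
        basicTerm n r hn J I.1) := by
  have hdual : ∀ I₀ : {I : Finset (Fin n) // I ∈ J.powerset.filter (fun I => I.card = r - 1)},
      ∃ Φ : A2 n r →ₗ[ℂ] ℂ, ∀ I, Φ (basicTerm n r hn J I.1) = (Pi.single I 1 : _ → ℂ) I₀ := by
    rintro ⟨I₀, hI₀⟩
    rw [Finset.mem_filter, Finset.mem_powerset] at hI₀
    obtain ⟨Φ, hΦI₀, hΦ⟩ := exists_dual_basicTerm hn hJ0 hJ hI₀.1 hI₀.2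
    refine ⟨Φ, fun ⟨I, hI⟩ => ?_⟩
    rw [Finset.mem_filter, Finset.mem_powerset] at hI
    by_cases h : I = I₀
    · subst h
      rw [Pi.single_eq_same, hΦI₀]
    · rw [Pi.single_eq_of_ne (fun h' => h (congrArg Subtype.val h').symm), hΦ I hI.1 hI.2 h]
  choose Φ hΦ using hdual
  refine LinearIndependent.of_comp (LinearMap.pi Φ) ?_
  have hbasis : LinearMap.pi Φ ∘ (fun I => basicTerm n r hn J I.1) = Pi.basisFun ℂ _ := by
    ext I I₀
    rw [Function.comp_apply, LinearMap.pi_apply, hΦ, Pi.basisFun_apply]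
  rw [hbasis]
  exact (Pi.basisFun ℂ _).linearIndependent

theorem prod_map_ebar (l : List (Fin n)) :
    (l.map (ebar n r)).prod = a2mk n r (l.map fun i => bgen n 1 i - bgen n 0 i).prod := by
  rw [map_list_prod, List.map_map]
  congr 2
  funext i
  rw [Function.comp_apply, map_sub, ebar]

theorem exists_ebar_mul_prod_ebar_eq_sum_add (hn : 0 < n) {J : Finset (Fin n)}
    (hJ0 : ∀ i ∈ J, (i : ℕ) ≠ 0) (t : ℕ) :
    ∃ c : Finset (Fin n) → ℂ, (∀ I, c I = 1 ∨ c I = -1) ∧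
      ∃ ρ ∈ ⨆ (p : ℕ × ℕ) (_ : p ≠ (r, t)), bicomp n r p.1 p.2,
        ebar n r ⟨0, hn⟩ * ((J.sort (· ≤ ·)).map (ebar n r)).prod =
          (∑ I ∈ J.powerset.filter (fun I => I.card = r - 1), c I • basicTerm n r hn J I) + ρ := by
  set z : Fin n := ⟨0, hn⟩
  have hzJ : z ∉ J := fun h => hJ0 z h rfl
  obtain ⟨ε, hε, hexp⟩ := exists_prod_map_bgen_sub_eq_sum (insert z J)
  set f : Finset (Fin n) → A2 n r :=
    fun U => ε U • a2mk n r (bProd n 0 U * bProd n 1 (insert z J \ U))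
  have hπ : ebar n r z * ((J.sort (· ≤ ·)).map (ebar n r)).prod =
      ∑ U ∈ J.powerset, f U + ∑ I ∈ J.powerset, f (insert z I) := by
    have hzlt : ∀ i ∈ J, z ≤ i := fun i _ => Nat.zero_le i
    rw [← List.prod_cons, ← List.map_cons, ← Finset.sort_insert (r := (· ≤ ·)) hzlt hzJ,
      prod_map_ebar, hexp, map_sum, ← Finset.sum_powerset_insert hzJ]
    simp only [f, map_smul]
  have hf_insert : ∀ I ∈ J.powerset, f (insert z I) = ε (insert z I) • basicTerm n r hn J I := by
    intro I hI
    rw [Finset.mem_powerset] at hI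
    dsimp only [f]
    rw [basicTerm_eq hn J fun i hi => hJ0 i (hI hi), Finset.insert_sdiff_insert,
      Finset.sdiff_insert_of_notMem hzJ]
  refine ⟨fun I => ε (insert z I), fun I => hε _,
    ∑ U ∈ J.powerset, f U + ∑ I ∈ J.powerset.filter (fun I => ¬ I.card = r - 1), f (insert z I),
    Submodule.add_mem _ (Submodule.sum_mem _ fun U hU => ?_) (Submodule.sum_mem _ fun I hI => ?_),
    ?_⟩
  · rw [Finset.mem_powerset] at hU
    refine Submodule.smul_mem _ _ ?_
    by_cases hUr : U.card = r
    · rw [map_mul, a2mk_bProd_eq_zero 0 (fun i hi => hJ0 i (hU hi)) hUr, zero_mul]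
      exact zero_mem _
    · exact a2mk_bProd_mul_bProd_mem_iSup_bicomp _ hUr t
  · rw [Finset.mem_filter, Finset.mem_powerset] at hI
    refine Submodule.smul_mem _ _ (a2mk_bProd_mul_bProd_mem_iSup_bicomp _ ?_ t)
    rw [Finset.card_insert_of_notMem fun h => hzJ (hI.1 h)]
    omega
  · rw [hπ, ← Finset.sum_filter_add_sum_filter_not J.powerset (fun I => I.card = r - 1)
      (fun I => f (insert z I))]
    have hmain : ∑ I ∈ J.powerset.filter (fun I => I.card = r - 1), f (insert z I) =
        ∑ I ∈ J.powerset.filter (fun I => I.card = r - 1), ε (insert z I) • basicTerm n r hn J I :=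
      Finset.sum_congr rfl fun I hI => hf_insert I (Finset.mem_filter.mp hI).1
    rw [hmain]
    abel

end Component

/-- with `k = min{n-1, 2r-2}` and `J ⊆ {1,…,n-1}`, `|J| = k` (`n > r > 1`), the
bidegree-`(r, k+1-r)` component of `π = ē₀ ∏_{i∈J} ē_i` equals
`∑_{I ⊆ J, |I| = r-1} ± e₀e_I ⊗ e_{J∖I}`, which is nonzero because the terms
`e₀e_I ⊗ e_{J∖I}` are distinct elements of a basis of `A ⊗ A`. -/
theorem pi_bidegree_component (n r : ℕ) (hr : 1 < r) (hrn : r < n)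
    (J : Finset (Fin n)) (hJ0 : ∀ i ∈ J, (i : ℕ) ≠ 0)
    (hJcard : J.card = min (n - 1) (2 * r - 2)) :
    ∃ c : Finset (Fin n) → ℂ, (∀ I, c I = 1 ∨ c I = -1) ∧
      ∃ ρ ∈ ⨆ (p : ℕ × ℕ) (_ : p ≠ (r, min (n - 1) (2 * r - 2) + 1 - r)),
          bicomp n r p.1 p.2,
        -- `π` decomposes as its `(r, k+1-r)`-component plus terms in the other bicomponents,
        ebar n r ⟨0, by omega⟩ * ((J.sort (· ≤ ·)).map (ebar n r)).prod =
          (∑ I ∈ J.powerset.filter (fun I => I.card = r - 1),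
            c I • basicTerm n r (by omega) J I) + ρ ∧
        -- the summands of the component lie in the `(r, k+1-r)`-bicomponent,
        (∀ I ∈ J.powerset.filter (fun I => I.card = r - 1),
          basicTerm n r (by omega) J I ∈
            bicomp n r r (min (n - 1) (2 * r - 2) + 1 - r)) ∧
        -- they are distinct elements of a basis, in particular linearly independent,
        LinearIndependent ℂ
          (fun I : {I : Finset (Fin n) // I ∈ J.powerset.filter (fun I => I.card = r - 1)} =>
            basicTerm n r (by omega) J I.1) ∧
        -- and hence the component is nonzero.
        (∑ I ∈ J.powerset.filter (fun I => I.card = r - 1),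
          c I • basicTerm n r (by omega) J I) ≠ 0 := by
  have hn : 0 < n := by omega
  obtain ⟨c, hc, ρ, hρ, hπ⟩ :=
    exists_ebar_mul_prod_ebar_eq_sum_add (r := r) hn hJ0 (min (n - 1) (2 * r - 2) + 1 - r)
  have hli := linearIndependent_basicTerm (r := r) hn hJ0 (by omega)
  obtain ⟨I₀, hI₀J, hI₀⟩ := Finset.exists_subset_card_eq (show r - 1 ≤ J.card by omega)
  refine ⟨c, hc, ρ, hρ, hπ, fun I hI => ?_, hli,
    hli.sum_smul_ne_zero (fun I _ => ?_) ⟨I₀, by simpa using ⟨hI₀J, hI₀⟩⟩⟩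
  · rw [Finset.mem_filter, Finset.mem_powerset] at hI
    convert basicTerm_mem_bicomp (r := r) hn hJ0 hI.1 using 2 <;> omega
  · rcases hc I with h | h <;> simp [h]
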